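/- arXiv:1503.05305 — 8 statements merged into one kernel-verified Lean document; each statement's English description precedes it below -/
import Mathlib

section
/- For all natural numbers n ≥ k (with k ≥ 2), the n-th k-generalized Fibonacci-like number satisfies G_n = G_0 · F_{n-1} + Σ_{m=0}^{k-3} ( G_{m+1} · Σ_{j=0}^{m+1} F_{n-1-j} ) + G_{k-1} · F_n, where F denotes the k-generalized Fibonacci sequence. -/
/-- Auxiliary: tail sums of the initial values. -/
private def Bsum (G : ℕ → ℤ) (m : ℕ) (j : ℕ) : ℤ := ∑ i ∈ Finset.Icc j (m + 1), G i

/-- For all natural numbers `n ≥ k` (with `k ≥ 2`), the `n`-th `k`-generalized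
Fibonacci-like number satisfies
`G n = G 0 * F (n-1) + ∑_{m=0}^{k-3} (G (m+1) * ∑_{j=0}^{m+1} F (n-1-j)) + G (k-1) * F n`. -/
theorem kgen_fibonacci_like_formula
    (k : ℕ) (hk : 2 ≤ k) (F G : ℕ → ℤ)
    (hF0 : ∀ n < k - 1, F n = 0) (hF1 : F (k - 1) = 1)
    (hFrec : ∀ n ≥ k, F n = ∑ i ∈ Finset.Icc 1 k, F (n - i))
    (hGinit : ∃ i < k, G i ≠ 0)
    (hGrec : ∀ n ≥ k, G n = ∑ i ∈ Finset.Icc 1 k, G (n - i)) :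
    ∀ n ≥ k,
      G n = G 0 * F (n - 1)
        + (∑ m ∈ Finset.range (k - 2), G (m + 1) * ∑ j ∈ Finset.range (m + 2), F (n - 1 - j))
        + G (k - 1) * F n := by
  obtain ⟨m, rfl⟩ : ∃ m, k = m + 2 := ⟨k - 2, by omega⟩
  have hk1 : m + 2 - 1 = m + 1 := rfl
  have hk2 : m + 2 - 2 = m := rfl
  rw [hk1] at hF0 hF1
  have hB : ∀ j, Bsum G m j = ∑ i ∈ Finset.Icc j (m + 1), G i := fun j => rfl
  -- the key F-identity
  have hdag : ∀ n, m + 2 ≤ n → ∀ j < m + 2,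
      F (n - 1 - j)
        = (∑ i ∈ (Finset.Icc 1 (m + 2)).filter (fun i => i ≤ n - (m + 2)),
            F (n - 1 - j - i))
          + (if j = n - (m + 2) then 1 else 0) := by
    intro n hn j hj
    by_cases hs : n - 1 - j < m + 2
    · have h0 : ∀ i ∈ (Finset.Icc 1 (m + 2)).filter (fun i => i ≤ n - (m + 2)),
          F (n - 1 - j - i) = 0 := by
        intro i hi
        simp only [Finset.mem_filter, Finset.mem_Icc] at hi
        exact hF0 _ (by omega)
      rw [Finset.sum_eq_zero h0, zero_add]
      by_cases hj' : j = n - (m + 2)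
      · have : n - 1 - j = m + 1 := by omega
        rw [this, if_pos hj', hF1]
      · have : n - 1 - j < m + 1 := by omega
        rw [hF0 _ this, if_neg hj']
    · push_neg at hs
      have hj' : j ≠ n - (m + 2) := by omega
      rw [if_neg hj', add_zero, hFrec _ hs]
      refine (Finset.sum_subset (Finset.filter_subset _ _) ?_).symm
      intro i hi hni
      simp only [Finset.mem_filter, Finset.mem_Icc, not_and, not_le] at hi hni
      exact hF0 _ (by omega)
  -- the sum of old initial terms equals `Bsum G m (n - (m+2))`
  have hS2 : ∀ n, m + 2 ≤ n →
      ∑ i ∈ (Finset.Icc 1 (m + 2)).filter (fun i => ¬ i ≤ n - (m + 2)), G (n - i)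
        = Bsum G m (n - (m + 2)) := by
    intro n hn
    rw [hB]
    refine Finset.sum_nbij' (fun i => n - i) (fun t => n - t) ?_ ?_ ?_ ?_ ?_
    · intro i hi
      simp only [Finset.mem_filter, Finset.mem_Icc, not_le] at hi ⊢
      omega
    · intro t ht
      simp only [Finset.mem_filter, Finset.mem_Icc, not_le] at ht ⊢
      omega
    · intro i hi
      simp only [Finset.mem_filter, Finset.mem_Icc, not_le] at hi
      show n - (n - i) = i
      omega
    · intro t ht
      simp only [Finset.mem_Icc] at ht
      show n - (n - t) = t
      omega
    · intro i hi; rfl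
  -- sum of Bsum G m j over the Kronecker delta
  have hBdelta : ∀ n, m + 2 ≤ n →
      ∑ j ∈ Finset.range (m + 2), Bsum G m j * (if j = n - (m + 2) then (1:ℤ) else 0)
        = Bsum G m (n - (m + 2)) := by
    intro n hn
    by_cases h : n - (m + 2) < m + 2
    · rw [Finset.sum_eq_single (n - (m + 2))]
      · rw [if_pos rfl, mul_one]
      · intro b _ hb; rw [if_neg hb, mul_zero]
      · intro hmem; exact absurd (Finset.mem_range.2 h) hmem
    · have hB0 : Bsum G m (n - (m + 2)) = 0 := by
        rw [hB, Finset.Icc_eq_empty (by omega), Finset.sum_empty]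
      rw [hB0]
      apply Finset.sum_eq_zero
      intro j hj
      simp only [Finset.mem_range] at hj
      rw [if_neg (by omega), mul_zero]
  -- main formula
  have main : ∀ n, m + 2 ≤ n →
      G n = ∑ j ∈ Finset.range (m + 2), Bsum G m j * F (n - 1 - j) := by
    intro n
    induction n using Nat.strong_induction_on with
    | _ n IH =>
      intro hn
      rw [hGrec n hn,
        ← Finset.sum_filter_add_sum_filter_not (Finset.Icc 1 (m + 2))
          (fun i => i ≤ n - (m + 2)), hS2 n hn]
      have h1 : ∑ i ∈ (Finset.Icc 1 (m + 2)).filter (fun i => i ≤ n - (m + 2)), G (n - i)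
          = ∑ i ∈ (Finset.Icc 1 (m + 2)).filter (fun i => i ≤ n - (m + 2)),
              ∑ j ∈ Finset.range (m + 2), Bsum G m j * F (n - 1 - j - i) := by
        refine Finset.sum_congr rfl ?_
        intro i hi
        simp only [Finset.mem_filter, Finset.mem_Icc] at hi
        rw [IH (n - i) (by omega) (by omega)]
        refine Finset.sum_congr rfl ?_
        intro j _
        have harg : n - i - 1 - j = n - 1 - j - i := by omega
        rw [harg]
      rw [h1, Finset.sum_comm]
      have h2 : ∑ j ∈ Finset.range (m + 2), Bsum G m j * F (n - 1 - j)
          = ∑ j ∈ Finset.range (m + 2),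
              (Bsum G m j * ∑ i ∈ (Finset.Icc 1 (m + 2)).filter (fun i => i ≤ n - (m + 2)),
                F (n - 1 - j - i)
              + Bsum G m j * (if j = n - (m + 2) then 1 else 0)) := by
        refine Finset.sum_congr rfl ?_
        intro j hj
        rw [hdag n hn j (Finset.mem_range.1 hj), mul_add]
      rw [h2, Finset.sum_add_distrib, hBdelta n hn]
      congr 1
      refine Finset.sum_congr rfl ?_
      intro j _
      rw [Finset.mul_sum]
  -- now convert to the stated form
  intro n hn
  rw [main n hn, hk2, hk1]
  have hFn : F n = ∑ j ∈ Finset.range (m + 2), F (n - 1 - j) := by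
    rw [hFrec n hn]
    rw [← Finset.Ico_add_one_right_eq_Icc, Finset.sum_Ico_eq_sum_range]
    refine Finset.sum_congr rfl ?_
    intro j _
    have harg : n - (1 + j) = n - 1 - j := by omega
    rw [harg]
  have hF1' : F (n - 1) = ∑ j ∈ Finset.range 1, F (n - 1 - j) := by
    rw [Finset.sum_range_one]
    rfl
  rw [hFn, hF1']
  have collapse : ∑ i ∈ Finset.range (m + 2), G i * ∑ j ∈ Finset.range (i + 1), F (n - 1 - j)
      = G 0 * ∑ j ∈ Finset.range 1, F (n - 1 - j)
      + (∑ i ∈ Finset.range m, G (i + 1) * ∑ j ∈ Finset.range (i + 2), F (n - 1 - j))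
      + G (m + 1) * ∑ j ∈ Finset.range (m + 2), F (n - 1 - j) := by
    rw [Finset.sum_range_succ, Finset.sum_range_succ']
    ring
  rw [← collapse]
  have swap : ∑ i ∈ Finset.range (m + 2), G i * ∑ j ∈ Finset.range (i + 1), F (n - 1 - j)
      = ∑ j ∈ Finset.range (m + 2), ∑ i ∈ Finset.Icc j (m + 1), G i * F (n - 1 - j) := by
    simp_rw [Finset.mul_sum]
    refine Finset.sum_comm' ?_
    intro i j
    simp only [Finset.mem_range, Finset.mem_Icc]
    omega
  rw [swap]
  refine Finset.sum_congr rfl ?_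
  intro j _
  rw [hB, Finset.sum_mul]
end

section
/- For all n ≥ k (with k ≥ 2), the n-th k-generalized Horadam-like number satisfies V_n = q_k · V_0 · U_{n-1} + Σ_{m=0}^{k-3} ( V_{m+1} · Σ_{j=0}^{m+1} q_{k-(m+1)+j} · U_{n-1-j} ) + V_{k-1} · U_n. -/
/-- For all `n ≥ k` (with `k ≥ 2`), the `n`-th `k`-generalized Horadam-like number
satisfies
`V n = q k * V 0 * U (n-1) + ∑_{m=0}^{k-3} (V (m+1) * ∑_{j=0}^{m+1} q (k-(m+1)+j) * U (n-1-j)) + V (k-1) * U n`. -/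
theorem kgen_horadam_like_formula
    (k : ℕ) (hk : 2 ≤ k) (q : ℕ → ℤ) (hq : ∀ i ∈ Finset.Icc 1 k, 1 ≤ q i)
    (U V : ℕ → ℤ)
    (hU0 : ∀ i < k - 1, U i = 0) (hU1 : U (k - 1) = 1)
    (hUrec : ∀ n ≥ k, U n = ∑ i ∈ Finset.Icc 1 k, q i * U (n - i))
    (hVinit : ∀ i < k, 0 ≤ V i) (hVne : ∃ i < k, V i ≠ 0)
    (hVrec : ∀ n ≥ k, V n = ∑ i ∈ Finset.Icc 1 k, q i * V (n - i)) :
    ∀ n ≥ k,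
      V n = q k * V 0 * U (n - 1)
        + (∑ m ∈ Finset.range (k - 2),
            V (m + 1) * ∑ j ∈ Finset.range (m + 2), q (k - (m + 1) + j) * U (n - 1 - j))
        + V (k - 1) * U n := by
  classical
  set B : ℕ → ℤ := fun r => if r = 0 then V (k - 1)
    else ∑ s ∈ Finset.range (k - r), q (k - s) * V (s + r - 1) with hB
  set W : ℕ → ℤ := fun m => ∑ r ∈ Finset.range k, B r * U (m - r) with hW
  have hWzero : ∀ m, m < k - 1 → W m = 0 := by
    intro m hm
    simp only [hW]
    exact Finset.sum_eq_zero fun r _ => by rw [hU0 (m - r) (by omega), mul_zero]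
  have key : ∀ n, k - 1 ≤ n → V n = W n := by
    intro n
    induction n using Nat.strong_induction_on with
    | _ n ih =>
      intro hn
      rcases eq_or_lt_of_le hn with h | h
      · subst h
        simp only [hW]
        rw [Finset.sum_eq_single 0 (fun r hr hr0 => by
              rw [hU0 (k - 1 - r) (by omega), mul_zero])
            (fun h0 => absurd (Finset.mem_range.mpr (by omega)) h0)]
        simp only [hB, Nat.sub_zero, if_pos rfl, hU1, mul_one]
      · obtain ⟨d, hd⟩ : ∃ d, d = n - k + 1 := ⟨_, rfl⟩
        have hn' : k ≤ n := by omega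
        have point : ∀ r ∈ Finset.range k,
            B r * U (n - r)
              = (∑ i ∈ Finset.Icc 1 k, B r * (q i * U (n - i - r)))
                + (if r = d then B d else 0) := by
          intro r hr
          rw [Finset.mem_range] at hr
          rcases lt_trichotomy r d with hc | hc | hc
          · rw [if_neg (by omega), add_zero, hUrec (n - r) (by omega), Finset.mul_sum]
            exact Finset.sum_congr rfl fun i _ => by rw [Nat.sub_right_comm]
          · rw [hc, if_pos rfl, show n - d = k - 1 by omega, hU1, mul_one,
              Finset.sum_eq_zero fun i hi => by
                rw [Finset.mem_Icc] at hi
                rw [hU0 (n - i - d) (by omega), mul_zero, mul_zero],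
              zero_add]
          · rw [if_neg (by omega), add_zero, hU0 (n - r) (by omega), mul_zero]
            exact (Finset.sum_eq_zero fun i _ => by
              rw [hU0 (n - i - r) (by omega), mul_zero, mul_zero]).symm
        have hWrec : W n = (∑ i ∈ Finset.Icc 1 k, q i * W (n - i))
            + (if d < k then B d else 0) := by
          calc W n = ∑ r ∈ Finset.range k,
              ((∑ i ∈ Finset.Icc 1 k, B r * (q i * U (n - i - r)))
                + (if r = d then B d else 0)) := by
                simp only [hW]; exact Finset.sum_congr rfl point
            _ = (∑ r ∈ Finset.range k, ∑ i ∈ Finset.Icc 1 k, B r * (q i * U (n - i - r)))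
                + ∑ r ∈ Finset.range k, (if r = d then B d else 0) :=
                Finset.sum_add_distrib
            _ = (∑ i ∈ Finset.Icc 1 k, ∑ r ∈ Finset.range k, B r * (q i * U (n - i - r)))
                + (if d < k then B d else 0) := by
                rw [Finset.sum_comm, Finset.sum_ite_eq' (Finset.range k) d fun _ => B d]
                simp [Finset.mem_range]
            _ = (∑ i ∈ Finset.Icc 1 k, q i * W (n - i)) + (if d < k then B d else 0) := by
                congr 1
                refine Finset.sum_congr rfl fun i _ => ?_
                simp only [hW, Finset.mul_sum]
                exact Finset.sum_congr rfl fun r _ => by ring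
        have hsplit : ∑ i ∈ Finset.Icc 1 k, q i * V (n - i)
            = (∑ i ∈ Finset.Icc 1 k, q i * W (n - i)) + (if d < k then B d else 0) := by
          have e1 : ∀ i ∈ Finset.Icc 1 k, q i * V (n - i)
              = q i * W (n - i) + (if i ≤ d then 0 else q i * V (n - i)) := by
            intro i hi
            rw [Finset.mem_Icc] at hi
            by_cases hid : i ≤ d
            · rw [if_pos hid, add_zero, ih (n - i) (by omega) (by omega)]
            · rw [if_neg hid, hWzero (n - i) (by omega), mul_zero, zero_add]
          rw [Finset.sum_congr rfl e1, Finset.sum_add_distrib]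
          congr 1
          by_cases hdk : d < k
          · rw [if_pos hdk]
            have hBd : B d = ∑ s ∈ Finset.range (k - d), q (k - s) * V (s + d - 1) := by
              simp only [hB]; rw [if_neg (by omega)]
            rw [hBd]
            rw [Finset.sum_congr rfl (fun i _ => by
              by_cases hid : i ≤ d
              · rw [if_pos hid, if_neg (by omega : ¬ d < i)]
              · rw [if_neg hid, if_pos (by omega : d < i)] :
              ∀ i ∈ Finset.Icc 1 k, (if i ≤ d then 0 else q i * V (n - i))
                = if d < i then q i * V (n - i) else 0)]
            rw [← Finset.sum_filter]
            rw [show (Finset.Icc 1 k).filter (fun i => d < i) = Finset.Icc (d + 1) k from by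
              ext a; simp [Finset.mem_filter, Finset.mem_Icc]; omega]
            refine Finset.sum_nbij' (fun a => k - a) (fun s => k - s) ?_ ?_ ?_ ?_ ?_
            · intro a ha; simp only [Finset.mem_Icc] at ha; simp only [Finset.mem_range]; omega
            · intro s hs; simp only [Finset.mem_range] at hs; simp only [Finset.mem_Icc]; omega
            · intro a ha; simp only [Finset.mem_Icc] at ha; omega
            · intro s hs; simp only [Finset.mem_range] at hs; omega
            · intro a ha; simp only [Finset.mem_Icc] at ha
              rw [show k - (k - a) = a by omega, show (k - a) + d - 1 = n - a by omega]
          · rw [if_neg hdk]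
            exact Finset.sum_eq_zero fun i hi => by
              rw [Finset.mem_Icc] at hi; rw [if_pos (by omega)]
        rw [hVrec n hn', hsplit, ← hWrec]
  intro n hn
  rw [key n (by omega)]
  simp only [hW]
  rw [show Finset.range k = insert 0 (Finset.Icc 1 (k - 1)) from by
    ext a; simp [Finset.mem_insert, Finset.mem_Icc]; omega]
  rw [Finset.sum_insert (by simp)]
  have hB0 : B 0 * U (n - 0) = V (k - 1) * U n := by
    simp only [hB, if_pos rfl, Nat.sub_zero]
  have main2 : ∑ r ∈ Finset.Icc 1 (k - 1), B r * U (n - r)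
      = q k * V 0 * U (n - 1)
        + ∑ m ∈ Finset.range (k - 2),
            V (m + 1) * ∑ j ∈ Finset.range (m + 2), q (k - (m + 1) + j) * U (n - 1 - j) := by
    have step1 : ∑ r ∈ Finset.Icc 1 (k - 1), B r * U (n - r)
        = ∑ r ∈ Finset.Icc 1 (k - 1), ∑ s ∈ Finset.range (k - r),
            q (k - s) * V (s + r - 1) * U (n - r) := by
      refine Finset.sum_congr rfl fun r hr => ?_
      rw [Finset.mem_Icc] at hr
      simp only [hB]
      rw [if_neg (by omega), Finset.sum_mul]
    rw [step1, Finset.sum_sigma']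
    have hmem : (⟨1, 0⟩ : (_ : ℕ) × ℕ) ∈ (Finset.Icc 1 (k - 1)).sigma
        (fun r => Finset.range (k - r)) := by
      simp only [Finset.mem_sigma, Finset.mem_Icc, Finset.mem_range]; omega
    have hswap : ∑ x ∈ ((Finset.Icc 1 (k - 1)).sigma fun r => Finset.range (k - r)).erase ⟨1, 0⟩,
        q (k - x.snd) * V (x.snd + x.fst - 1) * U (n - x.fst)
        = ∑ m ∈ Finset.range (k - 2),
            V (m + 1) * ∑ j ∈ Finset.range (m + 2), q (k - (m + 1) + j) * U (n - 1 - j) := by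
      rw [Finset.sum_congr rfl (fun m _ => Finset.mul_sum _ _ _ :
        ∀ m ∈ Finset.range (k - 2),
          V (m + 1) * ∑ j ∈ Finset.range (m + 2), q (k - (m + 1) + j) * U (n - 1 - j)
          = ∑ j ∈ Finset.range (m + 2), V (m + 1) * (q (k - (m + 1) + j) * U (n - 1 - j))),
        Finset.sum_sigma']
      refine Finset.sum_nbij' (fun p => (⟨p.2 + p.1 - 2, p.1 - 1⟩ : (_ : ℕ) × ℕ))
        (fun p => (⟨p.2 + 1, p.1 + 1 - p.2⟩ : (_ : ℕ) × ℕ)) ?_ ?_ ?_ ?_ ?_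
      · rintro ⟨r, s⟩ hp
        simp only [Finset.mem_erase, Finset.mem_sigma, Finset.mem_Icc, Finset.mem_range] at hp
        obtain ⟨hne, h1, h2⟩ := hp
        have hrs : ¬(r = 1 ∧ s = 0) := fun ⟨e1, e2⟩ => hne (by subst e1; subst e2; rfl)
        simp only [Finset.mem_sigma, Finset.mem_range]
        omega
      · rintro ⟨m, j⟩ hp
        simp only [Finset.mem_sigma, Finset.mem_range] at hp
        simp only [Finset.mem_erase, Finset.mem_sigma, Finset.mem_Icc, Finset.mem_range,
          ne_eq, Sigma.mk.inj_iff, heq_eq_eq, not_and]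
        omega
      · rintro ⟨r, s⟩ hp
        simp only [Finset.mem_erase, Finset.mem_sigma, Finset.mem_Icc, Finset.mem_range] at hp
        obtain ⟨hne, h1, h2⟩ := hp
        have hrs : ¬(r = 1 ∧ s = 0) := fun ⟨e1, e2⟩ => hne (by subst e1; subst e2; rfl)
        simp only [Sigma.mk.inj_iff, heq_eq_eq]
        omega
      · rintro ⟨m, j⟩ hp
        simp only [Finset.mem_sigma, Finset.mem_range] at hp
        simp only [Sigma.mk.inj_iff, heq_eq_eq]
        omega
      · rintro ⟨r, s⟩ hp
        simp only [Finset.mem_erase, Finset.mem_sigma, Finset.mem_Icc, Finset.mem_range] at hp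
        obtain ⟨hne, h1, h2⟩ := hp
        have hrs : ¬(r = 1 ∧ s = 0) := fun ⟨e1, e2⟩ => hne (by subst e1; subst e2; rfl)
        dsimp only
        rw [show s + r - 2 + 1 = s + r - 1 from by omega,
          show k - (s + r - 1) + (r - 1) = k - s from by omega,
          show n - 1 - (r - 1) = n - r from by omega]
        ring
    rw [← Finset.add_sum_erase _ _ hmem, hswap]
    norm_num
  rw [hB0, main2]
  ring
end

section
/- Let k ≥ 2 and let q_1 ≥ q_2 ≥ ⋯ ≥ q_k ≥ 1 be positive integers. Then the polynomial f(x) = x^k − q_1 x^{k-1} − q_2 x^{k-2} − ⋯ − q_{k-1} x − q_k has exactly one positive real root α, and this root satisfies q_1 < α < q_1 + 1. -/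
/-- The polynomial `x^k - q 1 * x^(k-1) - ⋯ - q k` with `q 1 ≥ ⋯ ≥ q k ≥ 1`
positive integers has exactly one positive real root `α`, and `q 1 < α < q 1 + 1`. -/
theorem char_poly_unique_positive_root
    (k : ℕ) (hk : 2 ≤ k) (q : ℕ → ℤ)
    (hq1 : ∀ i ∈ Finset.Icc 1 k, 1 ≤ q i)
    (hqmono : ∀ i j, 1 ≤ i → i ≤ j → j ≤ k → q j ≤ q i) :
    ∃ α : ℝ, 0 < α ∧ (α ^ k - ∑ i ∈ Finset.Icc 1 k, (q i : ℝ) * α ^ (k - i) = 0) ∧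
      (q 1 : ℝ) < α ∧ α < (q 1 : ℝ) + 1 ∧
      ∀ β : ℝ, 0 < β → β ^ k - ∑ i ∈ Finset.Icc 1 k, (q i : ℝ) * β ^ (k - i) = 0 →
        β = α := by
  have hk1 : 1 ≤ k := le_trans (by norm_num) hk
  set F : ℝ → ℝ := fun x => x ^ k - ∑ i ∈ Finset.Icc 1 k, (q i : ℝ) * x ^ (k - i) with hF
  have hq1' : (1 : ℝ) ≤ (q 1 : ℝ) := by
    exact_mod_cast hq1 1 (Finset.mem_Icc.mpr ⟨le_refl 1, hk1⟩)
  have hq1pos : (0 : ℝ) < (q 1 : ℝ) := lt_of_lt_of_le one_pos hq1'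
  have hqpos : ∀ i ∈ Finset.Icc 1 k, (0:ℝ) < (q i : ℝ) := fun i hi => by
    exact_mod_cast lt_of_lt_of_le one_pos (hq1 i hi)
  have hcont : Continuous F := by
    apply (continuous_pow k).sub
    exact continuous_finset_sum _ fun i _ => continuous_const.mul (continuous_pow _)
  -- F (q 1) < 0
  have hFneg : F (q 1 : ℝ) < 0 := by
    have hsplit : Finset.Icc 1 k = insert 1 (Finset.Icc 2 k) := by
      ext i; simp only [Finset.mem_Icc, Finset.mem_insert]; omega
    have h1 : (q 1 : ℝ) * (q 1 : ℝ) ^ (k - 1) = (q 1 : ℝ) ^ k := by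
      rw [← pow_succ']; congr 1; omega
    have hsum : (0:ℝ) < ∑ i ∈ Finset.Icc 2 k, (q i : ℝ) * (q 1 : ℝ) ^ (k - i) := by
      apply Finset.sum_pos
      · intro i hi
        have hi' : i ∈ Finset.Icc 1 k := by
          simp only [Finset.mem_Icc] at hi ⊢; omega
        exact mul_pos (hqpos i hi') (pow_pos hq1pos _)
      · exact Finset.nonempty_Icc.mpr hk
    have hnm : (1:ℕ) ∉ Finset.Icc 2 k := by simp
    simp only [hF, hsplit, Finset.sum_insert hnm, h1]
    linarith
  -- F (q 1 + 1) > 0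
  have hFpos : 0 < F ((q 1 : ℝ) + 1) := by
    set a : ℝ := (q 1 : ℝ) + 1 with ha
    have hapos : (0:ℝ) < a := by rw [ha]; linarith
    have hstep1 : ∑ i ∈ Finset.Icc 1 k, (q i : ℝ) * a ^ (k - i)
        ≤ ∑ i ∈ Finset.Icc 1 k, (q 1 : ℝ) * a ^ (k - i) := by
      apply Finset.sum_le_sum
      intro i hi
      have hi' := Finset.mem_Icc.mp hi
      have : (q i : ℝ) ≤ (q 1 : ℝ) := by
        exact_mod_cast hqmono 1 i (le_refl 1) hi'.1 hi'.2
      exact mul_le_mul_of_nonneg_right this (pow_pos hapos _).le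
    have hreindex : ∑ i ∈ Finset.Icc 1 k, a ^ (k - i) = ∑ j ∈ Finset.range k, a ^ j := by
      apply Finset.sum_nbij' (fun i => k - i) (fun j => k - j) <;>
        simp only [Finset.mem_Icc, Finset.mem_range] <;> intros <;>
        first | trivial | omega | (congr 1; omega)
    have hgeom : (q 1 : ℝ) * ∑ j ∈ Finset.range k, a ^ j = a ^ k - 1 := by
      have := geom_sum_mul a k
      have ha1 : a - 1 = (q 1 : ℝ) := by rw [ha]; ring
      rw [ha1] at this
      linarith [this]
    have : ∑ i ∈ Finset.Icc 1 k, (q 1 : ℝ) * a ^ (k - i) = a ^ k - 1 := by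
      rw [← Finset.mul_sum, hreindex, hgeom]
    simp only [hF]
    linarith
  have hlt : (q 1 : ℝ) < (q 1 : ℝ) + 1 := by linarith
  have h0 : (0:ℝ) ∈ Set.Ioo (F (q 1 : ℝ)) (F ((q 1:ℝ) + 1)) := ⟨hFneg, hFpos⟩
  obtain ⟨α, hαmem, hαroot⟩ := intermediate_value_Ioo hlt.le hcont.continuousOn h0
  have key : ∀ x : ℝ, 0 < x → F x = 0 → ∑ i ∈ Finset.Icc 1 k, (q i : ℝ) / x ^ i = 1 := by
    intro x hx hroot
    have hxk : (0:ℝ) < x ^ k := pow_pos hx k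
    have hsum : x ^ k = ∑ i ∈ Finset.Icc 1 k, (q i : ℝ) * x ^ (k - i) := by
      have := hroot; simp only [hF] at this; linarith
    have term : ∀ i ∈ Finset.Icc 1 k, (q i : ℝ) * x ^ (k - i) / x ^ k = (q i : ℝ) / x ^ i := by
      intro i hi
      have hik : i ≤ k := (Finset.mem_Icc.mp hi).2
      have hxx : x ^ (k - i) * x ^ i = x ^ k := by rw [← pow_add]; congr 1; omega
      rw [div_eq_div_iff hxk.ne' (pow_pos hx i).ne', mul_assoc, mul_comm (x ^ (k-i)) (x ^ i),
        ← mul_assoc, mul_assoc, mul_comm (x ^ i), hxx]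
    calc ∑ i ∈ Finset.Icc 1 k, (q i : ℝ) / x ^ i
        = ∑ i ∈ Finset.Icc 1 k, (q i : ℝ) * x ^ (k - i) / x ^ k :=
          (Finset.sum_congr rfl term).symm
      _ = (∑ i ∈ Finset.Icc 1 k, (q i : ℝ) * x ^ (k - i)) / x ^ k := by
          rw [Finset.sum_div]
      _ = 1 := by rw [← hsum, div_self hxk.ne']
  have mono : ∀ x y : ℝ, 0 < x → x < y →
      ∑ i ∈ Finset.Icc 1 k, (q i : ℝ) / y ^ i < ∑ i ∈ Finset.Icc 1 k, (q i : ℝ) / x ^ i := by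
    intro x y hx hxy
    apply Finset.sum_lt_sum_of_nonempty
    · exact Finset.nonempty_Icc.mpr hk1
    · intro i hi
      have hi1 : 1 ≤ i := (Finset.mem_Icc.mp hi).1
      have hxi : (0:ℝ) < x ^ i := pow_pos hx i
      have hlt' : x ^ i < y ^ i := pow_lt_pow_left₀ hxy hx.le (by omega)
      exact div_lt_div_of_pos_left (hqpos i hi) hxi hlt'
  have hαpos : 0 < α := lt_trans hq1pos hαmem.1
  refine ⟨α, hαpos, hαroot, hαmem.1, hαmem.2, ?_⟩
  intro β hβ hβroot
  have hs₁ := key α hαpos hαroot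
  have hs₂ := key β hβ hβroot
  by_contra hne
  rcases lt_or_gt_of_ne hne with h | h
  · have := mono β α hβ h; rw [hs₁, hs₂] at this; exact lt_irrefl _ this
  · have := mono α β hαpos h; rw [hs₁, hs₂] at this; exact lt_irrefl _ this
end

section
/- lim_{n→∞} V_n / V_{n-1} = α for the k-generalized Horadam-like sequence, where α ∈ (q_1, q_1 + 1) is the unique positive real root of x^k − q_1 x^{k-1} − ⋯ − q_k, assuming q_1 ≥ q_2 ≥ ⋯ ≥ q_k ≥ 1. -/
/-!
Normalising by `α ^ n` turns the recurrence into `x n = ∑ w i * x (n - i)` with weights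
`w i = q i / α ^ i`, which are positive and, because `α` is a root of the characteristic
polynomial, sum to `1`. Each term is then a weighted mean of the previous `k` terms. If all
terms from some index on lie in `[a, b]`, each of the `k` terms following a given `x t₀` gives it
weight at least `ε = min w`, so from `k + 1` steps later on all terms lie in an interval of
width `(1 - ε) (b - a)`; hence `x` is Cauchy. Since `V` is
eventually positive, the limit is positive, and `V n / V (n - 1) = α * x n / x (n - 1) → α`.
-/

open Filter Topology Finset

lemma Finset.exists_pos_forall_le {ι : Type*} (s : Finset ι) {f : ι → ℝ}
    (hf : ∀ i ∈ s, 0 < f i) : ∃ c, 0 < c ∧ ∀ i ∈ s, c ≤ f i := by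
  rcases s.eq_empty_or_nonempty with rfl | hs
  · exact ⟨1, one_pos, by simp⟩
  · obtain ⟨i, hi, hmin⟩ := s.exists_min_image f hs
    exact ⟨f i, hf i hi, hmin⟩

def AveragingRecurrence (k : ℕ) (w x : ℕ → ℝ) : Prop :=
  ∀ n, k ≤ n → x n = ∑ i ∈ Icc 1 k, w i * x (n - i)

namespace AveragingRecurrence

variable {k : ℕ} {w x : ℕ → ℝ}

lemma neg (hx : AveragingRecurrence k w x) : AveragingRecurrence k w (-x) := fun n hn => by
  simp [hx n hn, sum_neg_distrib]

lemma le_of_forall_window_le (hx : AveragingRecurrence k w x) (hw : ∀ i ∈ Icc 1 k, 0 ≤ w i)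
    (hsum : ∑ i ∈ Icc 1 k, w i = 1) {n : ℕ} {b : ℝ}
    (hb : ∀ t, n ≤ t → t < n + k → x t ≤ b) : ∀ t, n ≤ t → x t ≤ b := by
  intro t
  induction t using Nat.strong_induction_on with
  | _ t ih =>
    intro hnt
    by_cases ht : t < n + k
    · exact hb t hnt ht
    calc x t = ∑ i ∈ Icc 1 k, w i * x (t - i) := hx t (by omega)
      _ ≤ ∑ i ∈ Icc 1 k, w i * b := sum_le_sum fun i hi => by
          have := mem_Icc.mp hi
          exact mul_le_mul_of_nonneg_left (ih _ (by omega) (by omega)) (hw i hi)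
      _ = b := by rw [← sum_mul, hsum, one_mul]

lemma ge_of_forall_window_ge (hx : AveragingRecurrence k w x) (hw : ∀ i ∈ Icc 1 k, 0 ≤ w i)
    (hsum : ∑ i ∈ Icc 1 k, w i = 1) {n : ℕ} {a : ℝ}
    (ha : ∀ t, n ≤ t → t < n + k → a ≤ x t) : ∀ t, n ≤ t → a ≤ x t := fun t ht =>
  neg_le_neg_iff.mp <| hx.neg.le_of_forall_window_le hw hsum
    (fun s h₁ h₂ => neg_le_neg (ha s h₁ h₂)) t ht

variable {ε : ℝ}

lemma le_sub_mul_sub_of_forall_le (hx : AveragingRecurrence k w x) (hε₀ : 0 ≤ ε)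
    (hε : ∀ i ∈ Icc 1 k, ε ≤ w i) (hsum : ∑ i ∈ Icc 1 k, w i = 1) {n : ℕ} {b : ℝ}
    (hb : ∀ s, n ≤ s → x s ≤ b) {t₀ t : ℕ} (ht : n + k ≤ t) (h₀ : t₀ < t) (h₁ : t ≤ t₀ + k) :
    x t ≤ b - ε * (b - x t₀) := by
  have hj : t - t₀ ∈ Icc 1 k := mem_Icc.mpr ⟨by omega, by omega⟩
  have hdefect : w (t - t₀) * (b - x t₀) ≤ ∑ i ∈ Icc 1 k, w i * (b - x (t - i)) := by
    have := single_le_sum (f := fun i => w i * (b - x (t - i))) (fun i hi =>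
      mul_nonneg (hε₀.trans (hε i hi))
        (sub_nonneg.mpr (hb _ (by have := mem_Icc.mp hi; omega)))) hj
    rwa [Nat.sub_sub_self h₀.le] at this
  have hgap : 0 ≤ b - x t₀ := sub_nonneg.mpr (hb t₀ (by omega))
  calc x t = b - ∑ i ∈ Icc 1 k, w i * (b - x (t - i)) := by
        simp only [hx t (by omega), mul_sub, sum_sub_distrib, ← sum_mul, hsum, one_mul]
        ring
    _ ≤ b - w (t - t₀) * (b - x t₀) := by linarith
    _ ≤ b - ε * (b - x t₀) := by nlinarith [hε _ hj]

lemma forall_le_sub_mul_sub_of_forall_le (hx : AveragingRecurrence k w x) (hε₀ : 0 ≤ ε)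
    (hε : ∀ i ∈ Icc 1 k, ε ≤ w i) (hsum : ∑ i ∈ Icc 1 k, w i = 1) {n : ℕ} {b : ℝ}
    (hb : ∀ s, n ≤ s → x s ≤ b) : ∀ s, n + k + 1 ≤ s → x s ≤ b - ε * (b - x (n + k)) :=
  hx.le_of_forall_window_le (fun i hi => hε₀.trans (hε i hi)) hsum fun _ h₁ h₂ =>
    hx.le_sub_mul_sub_of_forall_le hε₀ hε hsum hb (by omega) (by omega) (by omega)

lemma forall_add_mul_sub_le_of_forall_ge (hx : AveragingRecurrence k w x) (hε₀ : 0 ≤ ε)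
    (hε : ∀ i ∈ Icc 1 k, ε ≤ w i) (hsum : ∑ i ∈ Icc 1 k, w i = 1) {n : ℕ} {a : ℝ}
    (ha : ∀ s, n ≤ s → a ≤ x s) : ∀ s, n + k + 1 ≤ s → a + ε * (x (n + k) - a) ≤ x s :=
  fun s hs => by
    have := hx.neg.forall_le_sub_mul_sub_of_forall_le hε₀ hε hsum (b := -a)
      (fun s hs => neg_le_neg (ha s hs)) s hs
    simp only [Pi.neg_apply] at this
    linarith

lemma exists_bounds_sub_eq_pow_mul (hx : AveragingRecurrence k w x) (hε₀ : 0 ≤ ε)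
    (hε : ∀ i ∈ Icc 1 k, ε ≤ w i) (hsum : ∑ i ∈ Icc 1 k, w i = 1) {a₀ b₀ : ℝ}
    (h₀ : ∀ s, a₀ ≤ x s ∧ x s ≤ b₀) (j : ℕ) :
    ∃ a b, b - a = (1 - ε) ^ j * (b₀ - a₀) ∧ ∀ s, j * (k + 1) ≤ s → a ≤ x s ∧ x s ≤ b := by
  induction j with
  | zero => exact ⟨a₀, b₀, by simp, fun s _ => h₀ s⟩
  | succ j ih =>
    obtain ⟨a, b, hab, hs⟩ := ih
    refine ⟨a + ε * (x (j * (k + 1) + k) - a), b - ε * (b - x (j * (k + 1) + k)), ?_,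
      fun s hs' => ?_⟩
    · rw [pow_succ, mul_comm _ (1 - ε), mul_assoc, ← hab]
      ring
    rw [add_one_mul] at hs'
    exact ⟨hx.forall_add_mul_sub_le_of_forall_ge hε₀ hε hsum (fun s h => (hs s h).1) s (by omega),
      hx.forall_le_sub_mul_sub_of_forall_le hε₀ hε hsum (fun s h => (hs s h).2) s (by omega)⟩

lemma cauchySeq (hx : AveragingRecurrence k w x) (hw : ∀ i ∈ Icc 1 k, 0 < w i)
    (hsum : ∑ i ∈ Icc 1 k, w i = 1) : CauchySeq x := by
  obtain ⟨ε, hε₀, hε⟩ := (Icc 1 k).exists_pos_forall_le hw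
  have hε' : ∀ i ∈ Icc 1 k, min ε 1 ≤ w i := fun i hi => (min_le_left _ _).trans (hε i hi)
  have hw₀ : ∀ i ∈ Icc 1 k, 0 ≤ w i := fun i hi => (hw i hi).le
  set B := ∑ j ∈ range k, |x j|
  have hB : ∀ t, 0 ≤ t → t < 0 + k → |x t| ≤ B := fun t _ ht =>
    single_le_sum (f := fun j => |x j|) (fun _ _ => abs_nonneg _) (mem_range.mpr (by omega))
  have h₀ : ∀ s, -B ≤ x s ∧ x s ≤ B := fun s =>
    ⟨hx.ge_of_forall_window_ge hw₀ hsum (fun t h₁ h₂ => (abs_le.mp (hB t h₁ h₂)).1) s s.zero_le,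
      hx.le_of_forall_window_le hw₀ hsum (fun t h₁ h₂ => (abs_le.mp (hB t h₁ h₂)).2) s s.zero_le⟩
  have hdecay : Tendsto (fun j : ℕ => (1 - min ε 1) ^ j * (B - -B)) atTop (𝓝 0) := by
    simpa using (tendsto_pow_atTop_nhds_zero_of_lt_one (by simp) (by simpa using hε₀)).mul_const
      (B - -B)
  rw [Metric.cauchySeq_iff']
  intro δ hδ
  obtain ⟨j, hj⟩ := (hdecay.eventually (gt_mem_nhds hδ)).exists
  obtain ⟨a, b, hab, hs⟩ :=
    hx.exists_bounds_sub_eq_pow_mul (lt_min hε₀ one_pos).le hε' hsum h₀ j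
  refine ⟨j * (k + 1), fun s hs' => ?_⟩
  have h₁ := hs s hs'
  have h₂ := hs _ le_rfl
  rw [Real.dist_eq, abs_sub_lt_iff]
  constructor <;> linarith

lemma exists_pos_tendsto (hx : AveragingRecurrence k w x) (hw : ∀ i ∈ Icc 1 k, 0 < w i)
    (hsum : ∑ i ∈ Icc 1 k, w i = 1) (hpos : ∀ᶠ n in atTop, 0 < x n) :
    ∃ L, 0 < L ∧ Tendsto x atTop (𝓝 L) := by
  obtain ⟨N, hN⟩ := eventually_atTop.mp hpos
  obtain ⟨c, hc, hcx⟩ :=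
    (range k).exists_pos_forall_le (f := fun j => x (N + j)) fun j _ => hN _ (by omega)
  have hlower : ∀ t, N ≤ t → c ≤ x t :=
    hx.ge_of_forall_window_ge (fun i hi => (hw i hi).le) hsum fun t h₁ h₂ => by
      simpa [Nat.add_sub_cancel' h₁] using hcx (t - N) (mem_range.mpr (by omega))
  obtain ⟨L, hL⟩ := cauchySeq_tendsto_of_complete (hx.cauchySeq hw hsum)
  exact ⟨L, hc.trans_le (ge_of_tendsto hL (eventually_atTop.mpr ⟨N, hlower⟩)), hL⟩

end AveragingRecurrence

section Horadam

variable {k : ℕ} {q V : ℕ → ℤ}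

lemma horadam_nonneg (hq : ∀ i ∈ Icc 1 k, 0 ≤ q i) (hVinit : ∀ i < k, 0 ≤ V i)
    (hVrec : ∀ n ≥ k, V n = ∑ i ∈ Icc 1 k, q i * V (n - i)) (n : ℕ) : 0 ≤ V n := by
  induction n using Nat.strong_induction_on with
  | _ n ih =>
    by_cases hn : n < k
    · exact hVinit n hn
    rw [hVrec n (by omega)]
    exact sum_nonneg fun i hi => mul_nonneg (hq i hi) (ih _ (by have := mem_Icc.mp hi; omega))

lemma horadam_sub_le (hq : ∀ i ∈ Icc 1 k, 1 ≤ q i) (hVinit : ∀ i < k, 0 ≤ V i)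
    (hVrec : ∀ n ≥ k, V n = ∑ i ∈ Icc 1 k, q i * V (n - i)) {n i : ℕ} (hn : k ≤ n)
    (hi : i ∈ Icc 1 k) : V (n - i) ≤ V n := by
  have hV := horadam_nonneg (fun i hi => zero_le_one.trans (hq i hi)) hVinit hVrec
  calc V (n - i) ≤ q i * V (n - i) := le_mul_of_one_le_left (hV _) (hq i hi)
    _ ≤ ∑ j ∈ Icc 1 k, q j * V (n - j) :=
      single_le_sum (f := fun j => q j * V (n - j))
        (fun j hj => mul_nonneg (zero_le_one.trans (hq j hj)) (hV _)) hi
    _ = V n := (hVrec n hn).symm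

lemma horadam_eventually_pos (hq : ∀ i ∈ Icc 1 k, 1 ≤ q i) (hVinit : ∀ i < k, 0 ≤ V i)
    (hVne : ∃ i < k, V i ≠ 0) (hVrec : ∀ n ≥ k, V n = ∑ i ∈ Icc 1 k, q i * V (n - i)) :
    ∀ᶠ n in atTop, 0 < V n := by
  obtain ⟨i₀, hi₀, hV₀⟩ := hVne
  refine eventually_atTop.mpr ⟨i₀ + k, fun n hn => ?_⟩
  induction n, hn using Nat.le_induction with
  | base =>
    calc 0 < V i₀ := (hVinit i₀ hi₀).lt_of_ne' hV₀
      _ = V (i₀ + k - k) := by rw [Nat.add_sub_cancel]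
      _ ≤ V (i₀ + k) :=
        horadam_sub_le hq hVinit hVrec (by omega) (mem_Icc.mpr ⟨by omega, le_rfl⟩)
  | succ n hn ih =>
    exact ih.trans_le (horadam_sub_le hq hVinit hVrec (i := 1) (by omega)
      (mem_Icc.mpr ⟨le_rfl, by omega⟩))

variable {α : ℝ}

lemma averagingRecurrence_div_pow
    (hVrec : ∀ n ≥ k, V n = ∑ i ∈ Icc 1 k, q i * V (n - i)) :
    AveragingRecurrence k (fun i => q i / α ^ i) (fun n => V n / α ^ n) := fun n hn => by
  beta_reduce
  rw [hVrec n hn, Int.cast_sum, sum_div]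
  refine sum_congr rfl fun i hi => ?_
  rw [Int.cast_mul, div_mul_div_comm, ← pow_add,
    Nat.add_sub_cancel' ((mem_Icc.mp hi).2.trans hn)]

lemma sum_div_pow_eq_one (hα : α ≠ 0)
    (hαroot : α ^ k - ∑ i ∈ Icc 1 k, (q i : ℝ) * α ^ (k - i) = 0) :
    ∑ i ∈ Icc 1 k, (q i : ℝ) / α ^ i = 1 := by
  have hpow : α ^ k ≠ 0 := pow_ne_zero k hα
  calc ∑ i ∈ Icc 1 k, (q i : ℝ) / α ^ i = (∑ i ∈ Icc 1 k, (q i : ℝ) * α ^ (k - i)) / α ^ k := by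
        rw [sum_div]
        refine sum_congr rfl fun i hi => ?_
        rw [div_eq_div_iff (pow_ne_zero i hα) hpow, mul_assoc, ← pow_add,
          Nat.sub_add_cancel (mem_Icc.mp hi).2]
    _ = 1 := by rw [← sub_eq_zero.mp hαroot, div_self hpow]

end Horadam

theorem kgen_horadam_like_ratio_tendsto_general
    (k : ℕ) (q : ℕ → ℤ)
    (hq1 : ∀ i ∈ Finset.Icc 1 k, 1 ≤ q i)
    (V : ℕ → ℤ)
    (hVinit : ∀ i < k, 0 ≤ V i) (hVne : ∃ i < k, V i ≠ 0)
    (hVrec : ∀ n ≥ k, V n = ∑ i ∈ Finset.Icc 1 k, q i * V (n - i))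
    (α : ℝ) (hαlb : (q 1 : ℝ) < α)
    (hαroot : α ^ k - ∑ i ∈ Finset.Icc 1 k, (q i : ℝ) * α ^ (k - i) = 0) :
    Tendsto (fun n => (V n : ℝ) / (V (n - 1) : ℝ)) atTop (nhds α) := by
  have hk : 1 ≤ k := by obtain ⟨i, hi, -⟩ := hVne; omega
  have hα : 0 < α := hαlb.trans' (by exact_mod_cast zero_lt_one.trans_le (hq1 1 (by simp [hk])))
  have hVpos := horadam_eventually_pos hq1 hVinit hVne hVrec
  set x : ℕ → ℝ := fun n => V n / α ^ n
  obtain ⟨L, hL, hxL⟩ := (averagingRecurrence_div_pow hVrec).exists_pos_tendsto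
    (fun i hi => div_pos (by exact_mod_cast zero_lt_one.trans_le (hq1 i hi)) (pow_pos hα i))
    (sum_div_pow_eq_one hα.ne' hαroot)
    (hVpos.mono fun n hn => div_pos (by exact_mod_cast hn) (pow_pos hα n))
  have hratio : Tendsto (fun n => α * (x n / x (n - 1))) atTop (𝓝 α) := by
    simpa [div_self hL.ne'] using
      (hxL.div (hxL.comp (tendsto_sub_atTop_nat 1)) hL.ne').const_mul α
  refine hratio.congr' ?_
  filter_upwards [eventually_ge_atTop 1, (tendsto_sub_atTop_nat 1).eventually hVpos]
    with n hn hVn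
  obtain ⟨m, rfl⟩ := Nat.exists_eq_add_of_le' hn
  have : (V m : ℝ) ≠ 0 := by exact_mod_cast hVn.ne'
  simp only [x, Nat.add_sub_cancel, pow_succ]
  field_simp

/-- The ratio of successive `k`-generalized Horadam-like numbers converges to the
unique positive real root `α ∈ (q 1, q 1 + 1)` of `x^k - q 1 x^(k-1) - ⋯ - q k`. -/
theorem kgen_horadam_like_ratio_tendsto
    (k : ℕ) (hk : 2 ≤ k) (q : ℕ → ℤ)
    (hq1 : ∀ i ∈ Finset.Icc 1 k, 1 ≤ q i)
    (hqmono : ∀ i j, 1 ≤ i → i ≤ j → j ≤ k → q j ≤ q i)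
    (V : ℕ → ℤ)
    (hVinit : ∀ i < k, 0 ≤ V i) (hVne : ∃ i < k, V i ≠ 0)
    (hVrec : ∀ n ≥ k, V n = ∑ i ∈ Finset.Icc 1 k, q i * V (n - i))
    (α : ℝ) (hαlb : (q 1 : ℝ) < α) (hαub : α < (q 1 : ℝ) + 1)
    (hαroot : α ^ k - ∑ i ∈ Finset.Icc 1 k, (q i : ℝ) * α ^ (k - i) = 0) :
    Tendsto (fun n => (V n : ℝ) / (V (n - 1) : ℝ)) atTop (nhds α) :=
  kgen_horadam_like_ratio_tendsto_general k q hq1 V hVinit hVne hVrec α hαlb hαroot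
end

section
/- For all n ≥ 1, the 2-periodic Fibonacci-like sequence satisfies G_n^{(a,b)} = G_1^{(a,b)} · F_n^{(a,b)} + G_0^{(a,b)} · F_{n-1}^{(b,a)}, where F^{(b,a)} denotes the 2-periodic Fibonacci sequence with the roles of a and b swapped. -/
/-- For the 2-periodic Fibonacci-like sequence `G` with parameters `(a,b)`:
`G n = G 1 * Fab n + G 0 * Fba (n-1)` for all `n ≥ 1`, where `Fab = F^(a,b)` and
`Fba = F^(b,a)`. -/
theorem two_periodic_fib_like_formula
    (a b : ℝ) (Fab Fba G : ℕ → ℝ)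
    (hFab0 : Fab 0 = 0) (hFab1 : Fab 1 = 1)
    (hFabrec : ∀ n ≥ 2, Fab n = if Even n then a * Fab (n - 1) + Fab (n - 2)
                                 else b * Fab (n - 1) + Fab (n - 2))
    (hFba0 : Fba 0 = 0) (hFba1 : Fba 1 = 1)
    (hFbarec : ∀ n ≥ 2, Fba n = if Even n then b * Fba (n - 1) + Fba (n - 2)
                                 else a * Fba (n - 1) + Fba (n - 2))
    (hGrec : ∀ n ≥ 2, G n = if Even n then a * G (n - 1) + G (n - 2)
                             else b * G (n - 1) + G (n - 2)) :
    ∀ n ≥ 1, G n = G 1 * Fab n + G 0 * Fba (n - 1) := by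
  intro n hn
  induction n using Nat.strong_induction_on with
  | _ n ih =>
    match n, hn with
    | 1, _ => simp [hFab1, hFba0]
    | 2, _ =>
      have hG := hGrec 2 (by norm_num)
      have hF := hFabrec 2 (by norm_num)
      norm_num at hG hF
      rw [hG, hF, hFab1, hFab0, hFba1]
      ring
    | (n+3), _ =>
      have h1 := ih (n+2) (by omega) (by omega)
      have h2 := ih (n+1) (by omega) (by omega)
      have hG := hGrec (n+3) (by omega)
      have hF := hFabrec (n+3) (by omega)
      have hB := hFbarec (n+2) (by omega)
      simp only [Nat.add_sub_cancel, show n+3-1 = n+2 by omega, show n+3-2 = n+1 by omega,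
        show n+2-1 = n+1 by omega, show n+2-2 = n by omega, show n+1-1 = n by omega] at *
      by_cases hpar : Even (n+3)
      · have hpar2 : ¬ Even (n+2) := by
          rcases hpar with ⟨k, hk⟩
          simp [Nat.even_iff]; omega
        rw [if_pos hpar] at hG hF
        rw [if_neg hpar2] at hB
        rw [hG, hF, hB, h1, h2]; ring
      · have hpar2 : Even (n+2) := by
          simp [Nat.even_iff] at hpar ⊢; omega
        rw [if_neg hpar] at hG hF
        rw [if_pos hpar2] at hB
        rw [hG, hF, hB, h1, h2]; ring
end

section
/- For all n ≥ 1 and positive reals a, b: F_{n-1}^{(b,a)} = (b/a)^{n − 2⌊n/2⌋} · F_{n-1}^{(a,b)}. In particular F_m^{(a,b)} = F_m^{(b,a)} for all odd m, and F_m^{(b,a)} = (b/a)·F_m^{(a,b)} for all even m ≥ 2. -/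
/-- For `a, b > 0`: `Fba (n-1) = (b/a)^(n - 2⌊n/2⌋) * Fab (n-1)` for all `n ≥ 1`;
in particular `Fab m = Fba m` for odd `m`, and `Fba m = (b/a) * Fab m` for even `m ≥ 2`. -/
theorem two_periodic_fib_swap
    (a b : ℝ) (ha : 0 < a) (hb : 0 < b) (Fab Fba : ℕ → ℝ)
    (hFab0 : Fab 0 = 0) (hFab1 : Fab 1 = 1)
    (hFabrec : ∀ n ≥ 2, Fab n = if Even n then a * Fab (n - 1) + Fab (n - 2)
                                 else b * Fab (n - 1) + Fab (n - 2))
    (hFba0 : Fba 0 = 0) (hFba1 : Fba 1 = 1)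
    (hFbarec : ∀ n ≥ 2, Fba n = if Even n then b * Fba (n - 1) + Fba (n - 2)
                                 else a * Fba (n - 1) + Fba (n - 2)) :
    (∀ n ≥ 1, Fba (n - 1) = (b / a) ^ (n - 2 * (n / 2)) * Fab (n - 1)) ∧
    (∀ m, Odd m → Fab m = Fba m) ∧
    (∀ m ≥ 2, Even m → Fba m = (b / a) * Fab m) := by
  have key : ∀ m : ℕ, Fba m = (if Even m then b / a else 1) * Fab m := by
    intro m
    induction m using Nat.strong_induction_on with
    | _ m ih =>
      match m with
      | 0 => simp [hFba0, hFab0]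
      | 1 => simp [hFba1, hFab1]
      | (k + 2) =>
        have h2 : k + 2 ≥ 2 := by omega
        have hb1 := hFbarec (k + 2) h2
        have ha1 := hFabrec (k + 2) h2
        have ihk := ih k (by omega)
        have ihk1 := ih (k + 1) (by omega)
        simp only [Nat.add_sub_cancel, show k + 2 - 1 = k + 1 by omega] at hb1 ha1
        rcases Nat.even_or_odd k with hk | hk
        · have hkm := Nat.even_iff.mp hk
          have hk2 : Even (k + 2) := Nat.even_iff.mpr (by omega)
          have hk1 : ¬ Even (k + 1) := fun h => by have := Nat.even_iff.mp h; omega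
          rw [if_pos hk2] at hb1 ha1 ⊢
          rw [if_neg hk1] at ihk1
          rw [if_pos hk] at ihk
          rw [hb1, ha1, ihk, ihk1]
          field_simp
        · have hkm := Nat.odd_iff.mp hk
          have hk2 : ¬ Even (k + 2) := fun h => by have := Nat.even_iff.mp h; omega
          have hk1 : Even (k + 1) := Nat.even_iff.mpr (by omega)
          have hk0 : ¬ Even k := fun h => by have := Nat.even_iff.mp h; omega
          rw [if_neg hk2] at hb1 ha1 ⊢
          rw [if_pos hk1] at ihk1
          rw [if_neg hk0] at ihk
          rw [hb1, ha1, ihk, ihk1]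
          field_simp
  refine ⟨?_, ?_, ?_⟩
  · intro n hn
    rcases Nat.even_or_odd n with he | ho
    · have hm := Nat.even_iff.mp he
      have h1 : n - 2 * (n / 2) = 0 := by omega
      have h2 : ¬ Even (n - 1) := fun h => by have := Nat.even_iff.mp h; omega
      rw [h1, pow_zero, one_mul]
      have := key (n - 1)
      rwa [if_neg h2, one_mul] at this
    · have hm := Nat.odd_iff.mp ho
      have h1 : n - 2 * (n / 2) = 1 := by omega
      have h2 : Even (n - 1) := Nat.even_iff.mpr (by omega)
      rw [h1, pow_one]
      have := key (n - 1)
      rwa [if_pos h2] at this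
  · intro m hm
    have hm' : ¬ Even m := fun h => by
      have := Nat.even_iff.mp h; have := Nat.odd_iff.mp hm; omega
    have := key m
    rw [if_neg hm', one_mul] at this
    exact this.symm
  · intro m _ hm
    have := key m
    rwa [if_pos hm] at this
end

section
/- For the 3-periodic ternary sequence: for all n ≥ 2, U_n^{(a,b,c)} = U_0 · T_{n-1}^{(b,c,a)} + U_1 · ( T_{n-1}^{(b,c,a)} + T_{n-2}^{(c,a,b)} ) + U_2 · T_n^{(a,b,c)}. -/
/-- For the 3-periodic ternary sequence: for all `n ≥ 2`,
`U n = U 0 * Tbca (n-1) + U 1 * (Tbca (n-1) + Tcab (n-2)) + U 2 * Tabc n`. -/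
theorem three_periodic_ternary_formula
    (a b c : ℝ) (Tabc Tbca Tcab U : ℕ → ℝ)
    (hTabc0 : Tabc 0 = 0) (hTabc1 : Tabc 1 = 0) (hTabc2 : Tabc 2 = 1)
    (hTabcrec : ∀ n ≥ 3, Tabc n =
      (if n % 3 = 0 then a else if n % 3 = 1 then b else c) * Tabc (n - 1)
        + Tabc (n - 2) + Tabc (n - 3))
    (hTbca0 : Tbca 0 = 0) (hTbca1 : Tbca 1 = 0) (hTbca2 : Tbca 2 = 1)
    (hTbcarec : ∀ n ≥ 3, Tbca n =
      (if n % 3 = 0 then b else if n % 3 = 1 then c else a) * Tbca (n - 1)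
        + Tbca (n - 2) + Tbca (n - 3))
    (hTcab0 : Tcab 0 = 0) (hTcab1 : Tcab 1 = 0) (hTcab2 : Tcab 2 = 1)
    (hTcabrec : ∀ n ≥ 3, Tcab n =
      (if n % 3 = 0 then c else if n % 3 = 1 then a else b) * Tcab (n - 1)
        + Tcab (n - 2) + Tcab (n - 3))
    (hUrec : ∀ n ≥ 3, U n =
      (if n % 3 = 0 then a else if n % 3 = 1 then b else c) * U (n - 1)
        + U (n - 2) + U (n - 3)) :
    ∀ n ≥ 2, U n = U 0 * Tbca (n - 1) + U 1 * (Tbca (n - 1) + Tcab (n - 2))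
      + U 2 * Tabc n := by

  intro n hn
  induction n using Nat.strong_induction_on with
  | _ n ih =>
    have hcases : n = 2 ∨ n = 3 ∨ n = 4 ∨ 5 ≤ n := by omega
    rcases hcases with rfl | rfl | rfl | h5
    · norm_num [hTbca1, hTcab0, hTabc2]
    · have hU := hUrec 3 (by norm_num)
      have hA := hTabcrec 3 (by norm_num)
      norm_num at hU hA
      rw [hU, hA]
      norm_num [hTbca2, hTcab1, hTabc1, hTabc0, hTabc2]
      ring
    · have hU := hUrec 4 (by norm_num)
      have hA := hTabcrec 4 (by norm_num)
      have hB := hTbcarec 3 (by norm_num)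
      have h3 := ih 3 (by norm_num) (by norm_num)
      norm_num at hU hA hB h3
      rw [hU, h3, hA, hB]
      norm_num [hTbca2, hTbca1, hTbca0, hTcab1, hTcab2, hTabc1, hTabc2]
      ring
    · obtain ⟨m, rfl⟩ := Nat.exists_eq_add_of_le h5
      have e1 := ih (4 + m) (by omega) (by omega)
      have e2 := ih (3 + m) (by omega) (by omega)
      have e3 := ih (2 + m) (by omega) (by omega)
      have hU := hUrec (5 + m) (by omega)
      have hA := hTabcrec (5 + m) (by omega)
      have hB := hTbcarec (4 + m) (by omega)
      have hC := hTcabrec (3 + m) (by omega)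
      simp only [show 5 + m - 1 = 4 + m from by omega,
        show 5 + m - 2 = 3 + m from by omega,
        show 5 + m - 3 = 2 + m from by omega,
        show 4 + m - 1 = 3 + m from by omega,
        show 4 + m - 2 = 2 + m from by omega,
        show 4 + m - 3 = 1 + m from by omega,
        show 3 + m - 1 = 2 + m from by omega,
        show 3 + m - 2 = 1 + m from by omega,
        show 3 + m - 3 = 0 + m from by omega,
        show 2 + m - 1 = 1 + m from by omega,
        show 2 + m - 2 = 0 + m from by omega] at *
      have hm : m % 3 = 0 ∨ m % 3 = 1 ∨ m % 3 = 2 := by omega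
      rcases hm with hm | hm | hm
      · simp only [show (5 + m) % 3 = 2 from by omega,
          show (4 + m) % 3 = 1 from by omega,
          show (3 + m) % 3 = 0 from by omega] at hU hA hB hC
        norm_num at hU hA hB hC
        rw [hU, e1, e2, e3, hA, hB, hC]
        ring_nf
      · simp only [show (5 + m) % 3 = 0 from by omega,
          show (4 + m) % 3 = 2 from by omega,
          show (3 + m) % 3 = 1 from by omega] at hU hA hB hC
        norm_num at hU hA hB hC
        rw [hU, e1, e2, e3, hA, hB, hC]
        ring_nf
      · simp only [show (5 + m) % 3 = 1 from by omega,
          show (4 + m) % 3 = 0 from by omega,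
          show (3 + m) % 3 = 2 from by omega] at hU hA hB hC
        norm_num at hU hA hB hC
        rw [hU, e1, e2, e3, hA, hB, hC]
        ring_nf
end

section
/- For the k-periodic k-nary sequence: for all n ≥ k, 𝔊_n = 𝔊_0 · ℱ_{n-1}^{(k;1)} + Σ_{m=0}^{k-3} ( 𝔊_{m+1} · Σ_{j=0}^{m+1} ℱ_{n-1-j}^{(k;j+1)} ) + 𝔊_{k-1} · 𝔉_n, where (k;j) denotes the cyclic shift (a_{j+1}, …, a_k, a_1, …, a_j) of the parameter tuple. -/
/-- For the `k`-periodic `k`-nary sequence: `F j` denotes the sequence with the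
parameter tuple cyclically shifted by `j` (so `F 0 = 𝔉`), and `G` satisfies the
same recurrence as `F 0` with arbitrary initial values. Then for all `n ≥ k`,
`G n = G 0 * F 1 (n-1) + ∑_{m=0}^{k-3} (G (m+1) * ∑_{j=0}^{m+1} F (j+1) (n-1-j))
  + G (k-1) * F 0 n`. -/
theorem k_periodic_k_nary_formula
    (k : ℕ) (hk : 2 ≤ k) (a : ℕ → ℝ) (F : ℕ → ℕ → ℝ) (G : ℕ → ℝ)
    (hF0 : ∀ j, ∀ i < k - 1, F j i = 0) (hF1 : ∀ j, F j (k - 1) = 1)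
    (hFrec : ∀ j, ∀ n ≥ k, F j n =
      a ((n + j) % k + 1) * F j (n - 1) + ∑ i ∈ Finset.Icc 2 k, F j (n - i))
    (hGrec : ∀ n ≥ k, G n =
      a (n % k + 1) * G (n - 1) + ∑ i ∈ Finset.Icc 2 k, G (n - i)) :
    ∀ n ≥ k,
      G n = G 0 * F 1 (n - 1)
        + (∑ m ∈ Finset.range (k - 2),
            G (m + 1) * ∑ j ∈ Finset.range (m + 2), F (j + 1) (n - 1 - j))
        + G (k - 1) * F 0 n := by
  -- truncated recurrence for F (the dropped terms are zero)
  have hB : ∀ j n, k ≤ n → F j n =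
      a ((n + j) % k + 1) * F j (n - 1) +
        ∑ i ∈ Finset.Icc 2 (min (n - k + 1) k), F j (n - i) := by
    intro j n hn
    rw [hFrec j n hn]
    congr 1
    refine (Finset.sum_subset ?_ ?_).symm
    · intro i hi
      simp only [Finset.mem_Icc] at hi ⊢
      omega
    · intro i hi hni
      apply hF0
      simp only [Finset.mem_Icc] at hi hni
      omega
  -- split recurrence for G
  have hA : ∀ n, k ≤ n → G n =
      a (n % k + 1) * G (n - 1) +
        (∑ i ∈ Finset.Icc 2 (min (n - k + 1) k), G (n - i)) +
        ∑ t ∈ Finset.Icc (n - k) (k - 2), G t := by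
    intro n hn
    rw [hGrec n hn, add_assoc]
    congr 1
    have h2 : Finset.Icc 2 k = Finset.Ioc 1 k := by
      ext x; simp only [Finset.mem_Icc, Finset.mem_Ioc]; omega
    have h3 : Finset.Icc 2 (min (n - k + 1) k) = Finset.Ioc 1 (min (n - k + 1) k) := by
      ext x; simp only [Finset.mem_Icc, Finset.mem_Ioc]; omega
    rw [h2, h3, ← Finset.sum_Ioc_consecutive (fun i => G (n - i))
      (by omega : 1 ≤ min (n - k + 1) k) (by omega : min (n - k + 1) k ≤ k)]
    congr 1
    refine Finset.sum_nbij' (fun x => n - x) (fun t => n - t) ?_ ?_ ?_ ?_ ?_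
    · intro x hx
      simp only [Finset.mem_Ioc] at hx
      simp only [Finset.mem_Icc]
      omega
    · intro t ht
      simp only [Finset.mem_Icc] at ht
      simp only [Finset.mem_Ioc]
      omega
    · intro x hx
      simp only [Finset.mem_Ioc] at hx
      show n - (n - x) = x
      omega
    · intro t ht
      simp only [Finset.mem_Icc] at ht
      show n - (n - t) = t
      omega
    · intro x hx
      rfl
  -- per-shift coefficient recurrence
  have hD : ∀ j, j + 2 ≤ k → ∀ n, k ≤ n →
      F (j + 1) (n - 1 - j) =
        a (n % k + 1) * F (j + 1) (n - 1 - 1 - j) +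
          (∑ i ∈ Finset.Icc 2 (min (n - k + 1) k), F (j + 1) (n - i - 1 - j)) +
          (if n = k + j then (1 : ℝ) else 0) := by
    intro j hj n hn
    rcases lt_trichotomy n (k + j) with h | h | h
    · rw [hF0 _ _ (by omega : n - 1 - j < k - 1),
        hF0 _ _ (by omega : n - 1 - 1 - j < k - 1),
        Finset.sum_eq_zero (fun i hi => hF0 _ _ (by
          simp only [Finset.mem_Icc] at hi; omega)),
        if_neg (by omega)]
      ring
    · have e1 : n - 1 - j = k - 1 := by omega
      rw [e1, hF1, hF0 _ _ (by omega : n - 1 - 1 - j < k - 1),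
        Finset.sum_eq_zero (fun i hi => hF0 _ _ (by
          simp only [Finset.mem_Icc] at hi; omega)),
        if_pos h]
      ring
    · have hm : k ≤ n - 1 - j := by omega
      rw [hB (j + 1) (n - 1 - j) hm]
      have e2 : n - 1 - j + (j + 1) = n := by omega
      have e3 : n - 1 - j - 1 = n - 1 - 1 - j := by omega
      rw [e2, e3, if_neg (by omega), add_zero]
      congr 1
      refine (Finset.sum_subset ?_ ?_).trans (Finset.sum_congr rfl ?_)
      · intro i hi
        simp only [Finset.mem_Icc] at hi ⊢
        omega
      · intro i hi hni
        apply hF0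
        simp only [Finset.mem_Icc] at hi hni
        omega
      · intro i hi
        congr 1
        simp only [Finset.mem_Icc] at hi
        omega
  -- recurrence for the middle coefficients
  have hE : ∀ m, m < k - 2 → ∀ n, k ≤ n →
      (∑ j ∈ Finset.range (m + 2), F (j + 1) (n - 1 - j)) =
        a (n % k + 1) * (∑ j ∈ Finset.range (m + 2), F (j + 1) (n - 1 - 1 - j)) +
          (∑ i ∈ Finset.Icc 2 (min (n - k + 1) k),
            ∑ j ∈ Finset.range (m + 2), F (j + 1) (n - i - 1 - j)) +
          (if n - k ≤ m + 1 then (1 : ℝ) else 0) := by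
    intro m hm n hn
    rw [Finset.mul_sum,
      show (∑ i ∈ Finset.Icc 2 (min (n - k + 1) k),
          ∑ j ∈ Finset.range (m + 2), F (j + 1) (n - i - 1 - j)) =
        ∑ j ∈ Finset.range (m + 2),
          ∑ i ∈ Finset.Icc 2 (min (n - k + 1) k), F (j + 1) (n - i - 1 - j)
        from Finset.sum_comm,
      show (if n - k ≤ m + 1 then (1 : ℝ) else 0) =
          ∑ j ∈ Finset.range (m + 2), (if n = k + j then (1 : ℝ) else 0) from ?_,
      ← Finset.sum_add_distrib, ← Finset.sum_add_distrib]
    · refine Finset.sum_congr rfl fun j hj => ?_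
      simp only [Finset.mem_range] at hj
      exact hD j (by omega) n hn
    · rw [Finset.sum_congr rfl (fun j (hj : j ∈ Finset.range (m + 2)) =>
        show (if n = k + j then (1 : ℝ) else 0) = (if j = n - k then (1 : ℝ) else 0) by
          rcases Nat.decEq n (k + j) with h | h
          · rw [if_neg h, if_neg (by omega)]
          · rw [if_pos h, if_pos (by omega)]),
        Finset.sum_ite_eq' (Finset.range (m + 2)) (n - k) (fun _ => (1 : ℝ))]
      rcases Nat.decLe (n - k) (m + 1) with h | h
      · rw [if_neg h, if_neg (by simp only [Finset.mem_range]; omega)]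
      · rw [if_pos h, if_pos (by simp only [Finset.mem_range]; omega)]
  -- leftover initial values
  have hT : ∀ n, k ≤ n →
      (∑ t ∈ Finset.Icc (n - k) (k - 2), G t) =
        G 0 * (if n = k then (1 : ℝ) else 0) +
          ∑ m ∈ Finset.range (k - 2),
            G (m + 1) * (if n - k ≤ m + 1 then (1 : ℝ) else 0) := by
    intro n hn
    have h1 : (∑ t ∈ Finset.Icc (n - k) (k - 2), G t) =
        ∑ t ∈ Finset.range (k - 1), (if n - k ≤ t then G t else 0) := by
      rw [Finset.sum_ite, Finset.sum_const_zero, add_zero]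
      apply Finset.sum_congr
      · ext t
        simp only [Finset.mem_Icc, Finset.mem_filter, Finset.mem_range]
        omega
      · intros; rfl
    rw [h1, show k - 1 = (k - 2) + 1 from by omega, Finset.sum_range_succ']
    rw [add_comm]
    congr 1
    · rcases Nat.decEq n k with h | h
      · rw [if_neg h, if_neg (by omega), mul_zero]
      · rw [if_pos h, if_pos (by omega), mul_one]
    · refine Finset.sum_congr rfl fun m hm => ?_
      rcases Nat.decLe (n - k) (m + 1) with h | h
      · rw [if_neg h, if_neg h, mul_zero]
      · rw [if_pos h, if_pos h, mul_one]
  -- main claim, by strong induction from k - 1 on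
  have main : ∀ n, k - 1 ≤ n → G n = G 0 * F 1 (n - 1)
      + (∑ m ∈ Finset.range (k - 2),
          G (m + 1) * ∑ j ∈ Finset.range (m + 2), F (j + 1) (n - 1 - j))
      + G (k - 1) * F 0 n := by
    intro n
    induction n using Nat.strong_induction_on with
    | _ n ih =>
      intro hn
      rcases eq_or_lt_of_le hn with heq | hlt
      · subst heq
        rw [hF0 1 _ (by omega : k - 1 - 1 < k - 1), hF1 0,
          Finset.sum_eq_zero (fun m hm => by
            rw [Finset.sum_eq_zero (fun j hj =>
              hF0 _ _ (by omega : k - 1 - 1 - j < k - 1)), mul_zero])]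
        ring
      · have hn' : k ≤ n := by omega
        -- coefficient recurrences instantiated
        have hC0 := hD 0 (by omega) n hn'
        simp only [Nat.sub_zero, Nat.add_zero, Nat.zero_add] at hC0
        have hmid : (∑ m ∈ Finset.range (k - 2),
              G (m + 1) * ∑ j ∈ Finset.range (m + 2), F (j + 1) (n - 1 - j)) =
            ∑ m ∈ Finset.range (k - 2), G (m + 1) *
              ((a (n % k + 1) * ∑ j ∈ Finset.range (m + 2), F (j + 1) (n - 1 - 1 - j)) +
                (∑ i ∈ Finset.Icc 2 (min (n - k + 1) k),
                  ∑ j ∈ Finset.range (m + 2), F (j + 1) (n - i - 1 - j)) +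
                (if n - k ≤ m + 1 then (1 : ℝ) else 0)) :=
          Finset.sum_congr rfl fun m hm => by
            rw [hE m (Finset.mem_range.mp hm) n hn']
        rw [hA n hn', hT n hn',
          ih (n - 1) (by omega) (by omega),
          Finset.sum_congr rfl (fun i (hi : i ∈ Finset.Icc 2 (min (n - k + 1) k)) => by
            simp only [Finset.mem_Icc] at hi
            exact ih (n - i) (by omega) (by omega)),
          hC0, hB 0 n hn',
          show (n + 0) % k = n % k from by rw [Nat.add_zero],
          hmid]
        -- now a pure algebraic identity about finite sums
        have key1 : (∑ i ∈ Finset.Icc 2 (min (n - k + 1) k),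
              (G 0 * F 1 (n - i - 1) +
                (∑ m ∈ Finset.range (k - 2),
                  G (m + 1) * ∑ j ∈ Finset.range (m + 2), F (j + 1) (n - i - 1 - j)) +
                G (k - 1) * F 0 (n - i))) =
            G 0 * (∑ i ∈ Finset.Icc 2 (min (n - k + 1) k), F 1 (n - i - 1)) +
              (∑ m ∈ Finset.range (k - 2), G (m + 1) *
                ∑ i ∈ Finset.Icc 2 (min (n - k + 1) k),
                  ∑ j ∈ Finset.range (m + 2), F (j + 1) (n - i - 1 - j)) +
              G (k - 1) * (∑ i ∈ Finset.Icc 2 (min (n - k + 1) k), F 0 (n - i)) := by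
          rw [Finset.sum_add_distrib, Finset.sum_add_distrib, Finset.mul_sum, Finset.mul_sum,
            Finset.sum_comm]
          congr 1
          congr 1
          exact Finset.sum_congr rfl fun m _ => (Finset.mul_sum _ _ _).symm
        have key2 : a (n % k + 1) * (∑ m ∈ Finset.range (k - 2),
              G (m + 1) * ∑ j ∈ Finset.range (m + 2), F (j + 1) (n - 1 - 1 - j)) =
            ∑ m ∈ Finset.range (k - 2), G (m + 1) *
              (a (n % k + 1) * ∑ j ∈ Finset.range (m + 2), F (j + 1) (n - 1 - 1 - j)) := by
          rw [Finset.mul_sum]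
          exact Finset.sum_congr rfl fun m _ => by ring
        have key3 : (∑ m ∈ Finset.range (k - 2), G (m + 1) *
              (a (n % k + 1) * ∑ j ∈ Finset.range (m + 2), F (j + 1) (n - 1 - 1 - j))) +
            (∑ m ∈ Finset.range (k - 2), G (m + 1) *
              ∑ i ∈ Finset.Icc 2 (min (n - k + 1) k),
                ∑ j ∈ Finset.range (m + 2), F (j + 1) (n - i - 1 - j)) +
            (∑ m ∈ Finset.range (k - 2),
              G (m + 1) * (if n - k ≤ m + 1 then (1 : ℝ) else 0)) =
            ∑ m ∈ Finset.range (k - 2), G (m + 1) *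
              ((a (n % k + 1) * ∑ j ∈ Finset.range (m + 2), F (j + 1) (n - 1 - 1 - j)) +
                (∑ i ∈ Finset.Icc 2 (min (n - k + 1) k),
                  ∑ j ∈ Finset.range (m + 2), F (j + 1) (n - i - 1 - j)) +
                (if n - k ≤ m + 1 then (1 : ℝ) else 0)) := by
          rw [← Finset.sum_add_distrib, ← Finset.sum_add_distrib]
          exact Finset.sum_congr rfl fun m _ => by ring
        linear_combination key1 + key2 + key3
  intro n hn
  exact main n (by omega)
end
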